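/- arXiv:1904.08669 — 11 statements merged into one kernel-verified Lean document; each statement's English description precedes it below -/
import Mathlib

section
/- Let X = {x₁,…,xₙ} be a finite discrete space (with the xᵢ pairwise distinct). Then every max-min measure μ on X can be represented in the form μ(φ) = maxᵢ min(λᵢ, φ(xᵢ)) for all φ ∈ C(X), for suitable λ₁,…,λₙ ∈ ℝ ∪ {±∞} with maxᵢ λᵢ = +∞ (with the conventions min(+∞, t) = t and min(-∞, t) = -∞, the maximum being a real number since some λᵢ = +∞). -/
def IsMaxMinMeasure {X : Type*} [TopologicalSpace X] (μ : C(X, ℝ) → ℝ) : Prop :=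
  (∀ c : ℝ, μ (ContinuousMap.const X c) = c) ∧
  (∀ φ ψ : C(X, ℝ), μ (φ ⊔ ψ) = max (μ φ) (μ ψ)) ∧
  (∀ (c : ℝ) (φ : C(X, ℝ)), μ (ContinuousMap.const X c ⊓ φ) = min c (μ φ))
/-- on a finite discrete space `X = {x₁, …, xₙ}` (the `xᵢ` pairwise
distinct, i.e. `x : Fin n → X` is a bijective enumeration), every max-min measure
is of the form `φ ↦ maxᵢ min (λᵢ) (φ (xᵢ))` for suitable
`λ₁, …, λₙ ∈ ℝ ∪ {±∞}` with `maxᵢ λᵢ = +∞` (the max-min combination being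
computed in the extended reals and then read off as a real number). -/
theorem maxMinMeasure_finite_representation
    {X : Type*} [TopologicalSpace X] [DiscreteTopology X] [Finite X]
    {n : ℕ} (x : Fin n → X) (hx : Function.Bijective x)
    (μ : C(X, ℝ) → ℝ) (hμ : IsMaxMinMeasure μ) :
    ∃ lam : Fin n → EReal, (∃ i, lam i = ⊤) ∧
      ∀ φ : C(X, ℝ), μ φ = (⨆ i, min (lam i) ((φ (x i) : ℝ) : EReal)).toReal := by
  classical
  obtain ⟨h1, h2, h3⟩ := hμ
  rcases Nat.eq_zero_or_pos n with hn | hn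
  · -- n = 0 is impossible: X would be empty, so the constants 0 and 1 coincide
    subst hn
    have hE : IsEmpty X := ⟨fun y => (hx.2 y).choose.elim0⟩
    have hc : (ContinuousMap.const X (0:ℝ)) = ContinuousMap.const X 1 := by
      ext y; exact hE.elim y
    have h01 : (0:ℝ) = 1 := by rw [← h1 0, ← h1 1, hc]
    norm_num at h01
  have hne : Nonempty (Fin n) := ⟨⟨0, hn⟩⟩
  have hCS : CompactSpace X := Finite.compactSpace
  have huniv : (Finset.univ : Finset (Fin n)).Nonempty := Finset.univ_nonempty
  -- monotonicity of μ
  have mono : ∀ φ ψ : C(X,ℝ), φ ≤ ψ → μ φ ≤ μ ψ := by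
    intro φ ψ h
    have := h2 φ ψ
    rw [sup_eq_right.mpr h] at this
    rw [this]; exact le_max_left _ _
  -- the test functions
  set F : Fin n → ℕ → ℕ → C(X,ℝ) := fun i t c =>
    ⟨fun y => if y = x i then (t:ℝ) else -(c:ℝ), continuous_of_discreteTopology⟩ with hF
  have Fapp : ∀ (i : Fin n) (t c : ℕ) (y : X),
      F i t c y = if y = x i then (t:ℝ) else -(c:ℝ) := fun i t c y => rfl
  have Fanti : ∀ (i : Fin n) (t : ℕ) {c c' : ℕ}, c ≤ c' → F i t c' ≤ F i t c := by
    intro i t c c' hcc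
    rw [ContinuousMap.le_def]
    intro y
    rw [Fapp, Fapp]
    split_ifs
    · exact le_refl _
    · exact neg_le_neg (by exact_mod_cast hcc)
  have μFanti : ∀ (i : Fin n) (t : ℕ) {c c' : ℕ}, c ≤ c' → μ (F i t c') ≤ μ (F i t c) :=
    fun i t _ _ hcc => mono _ _ (Fanti i t hcc)
  -- μ distributes over finite sups
  have hμsup : ∀ g : Fin n → C(X,ℝ),
      μ (Finset.univ.sup' huniv g) = Finset.univ.sup' huniv (fun i => μ (g i)) := by
    intro g
    exact Finset.comp_sup'_eq_sup'_comp huniv μ (fun a b => h2 a b)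
  -- pigeonhole
  have pigeon : ∀ g : ℕ → Fin n, ∃ i : Fin n, ∀ c : ℕ, ∃ c', c ≤ c' ∧ g c' = i := by
    intro g
    by_contra hcon
    push_neg at hcon
    choose N hN using hcon
    exact hN (g (Finset.univ.sup N)) (Finset.univ.sup N)
      (Finset.le_sup (Finset.mem_univ _)) rfl
  -- the lambdas
  set lam : Fin n → EReal := fun i => ⨆ t : ℕ, ⨅ c : ℕ, ((μ (F i t c) : ℝ) : EReal)
    with hlam
  refine ⟨lam, ?_, ?_⟩
  · -- some lam i = ⊤
    -- decomposition of constants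
    have E1 : ∀ t c : ℕ,
        ContinuousMap.const X (t:ℝ) = Finset.univ.sup' huniv (fun i => F i t c) := by
      intro t c
      apply le_antisymm
      · rw [ContinuousMap.le_def]
        intro y
        obtain ⟨j, rfl⟩ := hx.2 y
        have hj := ContinuousMap.le_def.mp
          (Finset.le_sup' (fun i => F i t c) (Finset.mem_univ j)) (x j)
        calc ((ContinuousMap.const X (t:ℝ)) (x j)) = F j t c (x j) := by
              rw [Fapp, if_pos rfl]; rfl
          _ ≤ _ := hj
      · apply Finset.sup'_le
        intro i _
        rw [ContinuousMap.le_def]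
        intro y
        rw [Fapp]
        split_ifs
        · exact le_refl _
        · calc -(c:ℝ) ≤ 0 := neg_nonpos.mpr (by positivity)
            _ ≤ (t:ℝ) := by positivity
    have step1 : ∀ t : ℕ, ∃ i : Fin n, ∀ c : ℕ, (t:ℝ) ≤ μ (F i t c) := by
      intro t
      have h' : ∀ c : ℕ, ∃ i : Fin n, (t:ℝ) ≤ μ (F i t c) := by
        intro c
        have := hμsup (fun i => F i t c)
        rw [← E1 t c, h1] at this
        obtain ⟨i, _, hi⟩ := Finset.exists_mem_eq_sup' huniv (fun i => μ (F i t c))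
        exact ⟨i, le_of_eq (this.trans hi)⟩
      choose g hg using h'
      obtain ⟨i, hi⟩ := pigeon g
      refine ⟨i, fun c => ?_⟩
      obtain ⟨c', hcc', rfl⟩ := hi c
      exact (hg c').trans (μFanti _ t hcc')
    choose gt hgt using step1
    obtain ⟨i, hi⟩ := pigeon gt
    refine ⟨i, (EReal.eq_top_iff_forall_lt _).mpr fun r => ?_⟩
    obtain ⟨t', htt', rfl⟩ := hi (Nat.floor r + 1)
    have h1' : (r : EReal) < ((t' : ℝ) : EReal) := by
      exact_mod_cast lt_of_lt_of_le (Nat.lt_floor_add_one r) (by exact_mod_cast htt')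
    refine h1'.trans_le ?_
    refine le_trans (le_iInf fun c => ?_) (le_iSup (fun t => ⨅ c : ℕ, ((μ (F (gt t') t c) : ℝ) : EReal)) t')
    exact_mod_cast hgt t' c
  · -- representation
    intro φ
    set M : ℕ := ⌈‖φ‖⌉₊ with hM
    have hbound : ∀ y : X, -(M:ℝ) ≤ φ y ∧ φ y ≤ (M:ℝ) := by
      intro y
      have h := (φ.norm_coe_le_norm y).trans (Nat.le_ceil ‖φ‖)
      rw [Real.norm_eq_abs, abs_le] at h
      exact h
    suffices hsuff : (μ φ : EReal) = ⨆ i, min (lam i) ((φ (x i) : ℝ) : EReal) by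
      rw [← hsuff, EReal.toReal_coe]
    apply le_antisymm
    · -- ≤
      have attain : ∀ c : ℕ, ∃ i, μ φ ≤ min (φ (x i)) (μ (F i M c)) := by
        intro c
        set c' : ℕ := max c M with hc'
        have E2 : φ = Finset.univ.sup' huniv
            (fun i => ContinuousMap.const X (φ (x i)) ⊓ F i M c') := by
          apply le_antisymm
          · rw [ContinuousMap.le_def]
            intro y
            obtain ⟨j, rfl⟩ := hx.2 y
            have hj := ContinuousMap.le_def.mp
              (Finset.le_sup' (fun i => ContinuousMap.const X (φ (x i)) ⊓ F i M c')
                (Finset.mem_univ j)) (x j)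
            refine le_trans ?_ hj
            rw [ContinuousMap.inf_apply, ContinuousMap.const_apply, Fapp, if_pos rfl]
            exact le_min (le_refl _) (hbound (x j)).2
          · apply Finset.sup'_le
            intro i _
            rw [ContinuousMap.le_def]
            intro y
            rw [ContinuousMap.inf_apply, ContinuousMap.const_apply, Fapp]
            split_ifs with hy
            · rw [hy]; exact min_le_left _ _
            · refine le_trans (min_le_right _ _) ?_
              refine le_trans ?_ (hbound y).1
              exact neg_le_neg (by exact_mod_cast le_max_right c M)
        have := hμsup (fun i => ContinuousMap.const X (φ (x i)) ⊓ F i M c')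
        rw [← E2] at this
        obtain ⟨i, _, hi⟩ := Finset.exists_mem_eq_sup'
          huniv (fun i => μ (ContinuousMap.const X (φ (x i)) ⊓ F i M c'))
        refine ⟨i, ?_⟩
        rw [this, hi, h3]
        exact min_le_min (le_refl _) (μFanti i M (le_max_left c M))
      choose g hg using attain
      obtain ⟨i, hi⟩ := pigeon g
      have hall : ∀ c : ℕ, μ φ ≤ min (φ (x i)) (μ (F i M c)) := by
        intro c
        obtain ⟨c', hcc', rfl⟩ := hi c
        exact (hg c').trans (min_le_min (le_refl _) (μFanti _ M hcc'))
      refine le_trans (le_min ?_ ?_) (le_iSup (fun i => min (lam i) ((φ (x i) : ℝ) : EReal)) i)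
      · -- μ φ ≤ lam i
        refine le_trans (le_iInf fun c => ?_)
          (le_iSup (fun t => ⨅ c : ℕ, ((μ (F i t c) : ℝ) : EReal)) M)
        exact_mod_cast ((hall c).trans (min_le_right _ _))
      · exact_mod_cast (hall 0).trans (min_le_left _ _)
    · -- ≥
      refine iSup_le fun i => ?_
      by_contra hcon
      push_neg at hcon
      obtain ⟨r, hr1, hr2⟩ := EReal.exists_between_coe_real hcon
      have hrlam : (r : EReal) < lam i := hr2.trans_le (min_le_left _ _)
      have hrphi : r < φ (x i) := by
        have := hr2.trans_le (min_le_right _ _)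
        exact_mod_cast this
      rw [hlam, lt_iSup_iff] at hrlam
      obtain ⟨t, ht⟩ := hrlam
      have hrc : ∀ c : ℕ, r < μ (F i t c) := by
        intro c
        have := ht.trans_le (iInf_le (fun c => ((μ (F i t c) : ℝ) : EReal)) c)
        exact_mod_cast this
      have E3 : ContinuousMap.const X (φ (x i)) ⊓ F i t M ≤ φ := by
        rw [ContinuousMap.le_def]
        intro y
        rw [ContinuousMap.inf_apply, ContinuousMap.const_apply, Fapp]
        split_ifs with hy
        · rw [hy]; exact min_le_left _ _
        · exact le_trans (min_le_right _ _) (hbound y).1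
      have : min (φ (x i)) (μ (F i t M)) ≤ μ φ := by
        rw [← h3]; exact mono _ _ E3
      have : r < μ φ := lt_of_lt_of_le (lt_min hrphi (hrc M)) this
      exact absurd hr1 (not_lt.mpr (by exact_mod_cast this.le))
end

section
/- Let X be a finite discrete space. Then for every max-min measure μ on X, every φ ∈ C(X) and every c > 0, the inequalities μ(φ + c_X) ≤ μ(φ) + c and μ(φ) - c ≤ μ(φ - c_X) hold, where c_X denotes the constant function with value c. -/
/-!
On a finite discrete space every `ψ` squeezed between `lo` and `hi` is the pointwise maximum
over `x` of `ψ x ⊓ e_x`, where `e_x` equals `hi` at `x` and `lo` elsewhere. The axioms of a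
max-min measure then give `μ ψ = max_x min (ψ x) (μ e_x)`, with weights `μ e_x` that do not
depend on `ψ`. Since `min (a + c) b ≤ min a b + c` for `c ≥ 0`, the first inequality follows;
the second is the first applied to `φ - c`.
-/

section

variable {X : Type*} [TopologicalSpace X] [DiscreteTopology X] [DecidableEq X]

def discreteBump (x : X) (lo hi : ℝ) : C(X, ℝ) :=
  ⟨fun y => if y = x then hi else lo, continuous_of_discreteTopology⟩

theorem discreteBump_apply (x y : X) (lo hi : ℝ) :
    discreteBump x lo hi y = if y = x then hi else lo :=
  rfl

theorem eq_sup'_const_inf_discreteBump [Fintype X] [Nonempty X] {ψ : C(X, ℝ)} {lo hi : ℝ}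
    (hlo : ∀ y, lo ≤ ψ y) (hhi : ∀ y, ψ y ≤ hi) :
    ψ = Finset.univ.sup' Finset.univ_nonempty
      (fun x => ContinuousMap.const X (ψ x) ⊓ discreteBump x lo hi) := by
  ext y
  rw [ContinuousMap.sup'_apply]
  refine le_antisymm ?_ (Finset.sup'_le _ _ fun x _ => ?_)
  · refine le_trans (le_of_eq ?_) (Finset.le_sup' _ (Finset.mem_univ y))
    simp [discreteBump_apply, hhi y]
  · by_cases hyx : y = x
    · subst hyx
      exact inf_le_left
    · simpa [discreteBump_apply, hyx] using Or.inr (hlo y)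

theorem IsMaxMinMeasure.eq_sup'_min_discreteBump [Fintype X] [Nonempty X] {μ : C(X, ℝ) → ℝ}
    (hμ : IsMaxMinMeasure μ) {ψ : C(X, ℝ)} {lo hi : ℝ}
    (hlo : ∀ y, lo ≤ ψ y) (hhi : ∀ y, ψ y ≤ hi) :
    μ ψ = Finset.univ.sup' Finset.univ_nonempty
      (fun x => min (ψ x) (μ (discreteBump x lo hi))) := by
  conv_lhs => rw [eq_sup'_const_inf_discreteBump hlo hhi]
  rw [Finset.apply_sup'_eq_sup'_comp _ μ hμ.2.1]
  exact Finset.sup'_congr _ rfl fun x _ => hμ.2.2 _ _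

end

theorem IsMaxMinMeasure.map_add_const_le {X : Type*} [TopologicalSpace X] [DiscreteTopology X]
    [Finite X] {μ : C(X, ℝ) → ℝ} (hμ : IsMaxMinMeasure μ) (φ : C(X, ℝ)) {c : ℝ} (hc : 0 ≤ c) :
    μ (φ + ContinuousMap.const X c) ≤ μ φ + c := by
  classical
  cases isEmpty_or_nonempty X
  · rw [Subsingleton.elim (φ + ContinuousMap.const X c) φ]
    linarith
  have := Fintype.ofFinite X
  obtain ⟨lo, hlo⟩ := (Set.finite_range φ).bddBelow
  obtain ⟨hi, hhi⟩ := (Set.finite_range (φ + ContinuousMap.const X c)).bddAbove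
  have hφlo (y : X) : lo ≤ φ y := hlo ⟨y, rfl⟩
  have hφhi (y : X) : φ y + c ≤ hi := hhi ⟨y, rfl⟩
  have hψlo (y : X) : lo ≤ (φ + ContinuousMap.const X c) y := by
    simp only [ContinuousMap.add_apply, ContinuousMap.const_apply]
    linarith [hφlo y]
  rw [hμ.eq_sup'_min_discreteBump hψlo hφhi,
    hμ.eq_sup'_min_discreteBump (hi := hi) hφlo fun y => by linarith [hφhi y]]
  refine Finset.sup'_le _ _ fun x _ => ?_
  calc min ((φ + ContinuousMap.const X c) x) (μ (discreteBump x lo hi))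
      ≤ min (φ x) (μ (discreteBump x lo hi)) + c := by
        rw [ContinuousMap.add_apply, ContinuousMap.const_apply, ← min_add_add_right]
        exact min_le_min_left _ (by linarith)
    _ ≤ _ := by
        gcongr
        exact Finset.le_sup' (fun x => min (φ x) (μ (discreteBump x lo hi))) (Finset.mem_univ x)

/-- on a finite discrete space, every max-min measure satisfies
`μ(φ + c) ≤ μ(φ) + c` and `μ(φ) - c ≤ μ(φ - c)` for every `c > 0`. -/
theorem maxMinMeasure_translation_ineq_finite
    {X : Type*} [TopologicalSpace X] [DiscreteTopology X] [Finite X]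
    (μ : C(X, ℝ) → ℝ) (hμ : IsMaxMinMeasure μ) (φ : C(X, ℝ)) (c : ℝ) (hc : 0 < c) :
    μ (φ + ContinuousMap.const X c) ≤ μ φ + c ∧
      μ φ - c ≤ μ (φ - ContinuousMap.const X c) := by
  refine ⟨hμ.map_add_const_le φ hc.le, sub_le_iff_le_add.2 ?_⟩
  simpa using hμ.map_add_const_le (φ - ContinuousMap.const X c) hc.le
end

section
/- For every compact Hausdorff space X, the space J(X) of all max-min measures on X, endowed with the weak* topology, is compact. -/
namespace IsMaxMinMeasure

variable {X : Type*} [TopologicalSpace X]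

theorem le_apply_of_const_le {μ : C(X, ℝ) → ℝ} (hμ : IsMaxMinMeasure μ) {a : ℝ}
    {φ : C(X, ℝ)} (h : ContinuousMap.const X a ≤ φ) : a ≤ μ φ := by
  have hsup := hμ.2.1 φ (ContinuousMap.const X a)
  rw [sup_eq_left.2 h, hμ.1] at hsup
  exact hsup ▸ le_max_right _ _

theorem apply_le_of_le_const {μ : C(X, ℝ) → ℝ} (hμ : IsMaxMinMeasure μ) {b : ℝ}
    {φ : C(X, ℝ)} (h : φ ≤ ContinuousMap.const X b) : μ φ ≤ b := by
  have hinf := hμ.2.2 b φ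
  rw [inf_eq_right.2 h] at hinf
  exact hinf ▸ min_le_left _ _

theorem apply_mem_Icc_norm [CompactSpace X] {μ : C(X, ℝ) → ℝ} (hμ : IsMaxMinMeasure μ)
    (φ : C(X, ℝ)) : μ φ ∈ Set.Icc (-‖φ‖) ‖φ‖ :=
  ⟨hμ.le_apply_of_const_le fun x => (abs_le.mp (φ.norm_coe_le_norm x)).1,
    hμ.apply_le_of_le_const fun x => (abs_le.mp (φ.norm_coe_le_norm x)).2⟩

end IsMaxMinMeasure

section Topology

variable {X : Type*} [TopologicalSpace X]

theorem isClosed_setOf_isMaxMinMeasure : IsClosed {μ : C(X, ℝ) → ℝ | IsMaxMinMeasure μ} := by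
  simp only [IsMaxMinMeasure, Set.ofPred_and, Set.ofPred_forall]
  refine .inter (isClosed_iInter fun c => ?_)
    (.inter (isClosed_iInter fun φ => isClosed_iInter fun ψ => ?_)
      (isClosed_iInter fun c => isClosed_iInter fun φ => ?_))
  · exact isClosed_eq (continuous_apply _) continuous_const
  · exact isClosed_eq (continuous_apply _) ((continuous_apply φ).max (continuous_apply ψ))
  · exact isClosed_eq (continuous_apply _) (continuous_const.min (continuous_apply φ))

theorem isCompact_setOf_isMaxMinMeasure [CompactSpace X] :
    IsCompact {μ : C(X, ℝ) → ℝ | IsMaxMinMeasure μ} :=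
  (isCompact_univ_pi fun _ => isCompact_Icc).of_isClosed_subset
    isClosed_setOf_isMaxMinMeasure fun _ hμ φ _ => hμ.apply_mem_Icc_norm φ

end Topology

theorem compactSpace_maxMinMeasures_general
    {X : Type*} [TopologicalSpace X] [CompactSpace X] :
    CompactSpace {μ : C(X, ℝ) → ℝ // IsMaxMinMeasure μ} :=
  isCompact_iff_compactSpace.mp isCompact_setOf_isMaxMinMeasure

/-- the space `J(X)` of max-min measures on a compact Hausdorff space,
with the weak* topology (the subspace topology from the product topology on
`ℝ^{C(X)}`), is compact. -/
theorem compactSpace_maxMinMeasures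
    {X : Type*} [TopologicalSpace X] [CompactSpace X] [T2Space X] :
    CompactSpace {μ : C(X, ℝ) → ℝ // IsMaxMinMeasure μ} :=
  compactSpace_maxMinMeasures_general
end

section
/- Let f : X → Y be a continuous map of compact Hausdorff spaces. For every max-min measure μ on X, the functional J(f)(μ) : C(Y) → ℝ defined by J(f)(μ)(φ) = μ(φ ∘ f) is a max-min measure on Y, and the resulting map J(f) : J(X) → J(Y) is continuous with respect to the weak* topologies. -/
/-- for a continuous map `f : X → Y` of compact Hausdorff spaces, the
pushforward `J(f)(μ) = (φ ↦ μ (φ ∘ f))` of a max-min measure is a max-min measure,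
and the resulting map `J(f) : J(X) → J(Y)` is continuous for the weak* topologies
(continuity into the subspace `J(Y)` of `ℝ^{C(Y)}` being equivalent to continuity
into `ℝ^{C(Y)}`). -/
theorem maxMinMeasure_pushforward
    {X Y : Type*} [TopologicalSpace X] [CompactSpace X] [T2Space X]
    [TopologicalSpace Y] [CompactSpace Y] [T2Space Y] (f : C(X, Y)) :
    (∀ μ : C(X, ℝ) → ℝ, IsMaxMinMeasure μ →
      IsMaxMinMeasure (fun φ : C(Y, ℝ) => μ (φ.comp f))) ∧
    Continuous (fun (μ : {μ : C(X, ℝ) → ℝ // IsMaxMinMeasure μ})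
      (φ : C(Y, ℝ)) => μ.1 (φ.comp f)) := by
  constructor
  · rintro μ ⟨h1, h2, h3⟩
    refine ⟨fun c => ?_, fun φ ψ => ?_, fun c φ => ?_⟩
    · have : (ContinuousMap.const Y c).comp f = ContinuousMap.const X c := by
        ext x; rfl
      simp [this, h1]
    · have : (φ ⊔ ψ).comp f = φ.comp f ⊔ ψ.comp f := by ext x; rfl
      simp [this, h2]
    · have : (ContinuousMap.const Y c ⊓ φ).comp f
          = ContinuousMap.const X c ⊓ φ.comp f := by ext x; rfl
      simp [this, h3]
  · exact continuous_pi fun φ =>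
      (continuous_apply (φ.comp f)).comp continuous_subtype_val
end

section
/- Let X be a zero-dimensional compact Hausdorff space. Then for every max-min measure μ on X, every φ ∈ C(X) and every c > 0, the inequalities μ(φ + c_X) ≤ μ(φ) + c and μ(φ) - c ≤ μ(φ - c_X) hold, where c_X denotes the constant function with value c. -/
open Classical in
/-- A two-valued continuous "step" function from a clopen set. -/
noncomputable def stepFn {X : Type*} [TopologicalSpace X] (U : Set X) (hU : IsClopen U)
    (a b : ℝ) : C(X, ℝ) :=
  ⟨U.piecewise (fun _ => a) (fun _ => b), by
    apply Continuous.piecewise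
    · intro x hx
      rw [hU.frontier_eq] at hx
      exact absurd hx (Set.notMem_empty x)
    · exact continuous_const
    · exact continuous_const⟩

lemma stepFn_of_mem {X : Type*} [TopologicalSpace X] {U : Set X} (hU : IsClopen U)
    (a b : ℝ) {x : X} (hx : x ∈ U) : stepFn U hU a b x = a := by
  simp [stepFn, Set.piecewise, hx]

lemma stepFn_of_not_mem {X : Type*} [TopologicalSpace X] {U : Set X} (hU : IsClopen U)
    (a b : ℝ) {x : X} (hx : x ∉ U) : stepFn U hU a b x = b := by
  simp [stepFn, Set.piecewise, hx]

/-- Clopen interposition: in a space with a clopen basis, between a compact set and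
an open superset there is a clopen set. -/
lemma exists_clopen_between {X : Type*} [TopologicalSpace X]
    (hzd : ∃ B : Set (Set X), (∀ s ∈ B, IsClopen s) ∧
      TopologicalSpace.IsTopologicalBasis B)
    {K V : Set X} (hK : IsCompact K) (hV : IsOpen V) (hKV : K ⊆ V) :
    ∃ U : Set X, IsClopen U ∧ K ⊆ U ∧ U ⊆ V := by
  obtain ⟨B, hB1, hB2⟩ := hzd
  choose! W hWB hWmem hWsub using
    fun x (hx : x ∈ K) => hB2.exists_subset_of_mem_open (hKV hx) hV
  obtain ⟨s, hsK, hcover⟩ := hK.elim_nhds_subcover W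
    (fun x hx => ((hB1 _ (hWB x hx)).isOpen).mem_nhds (hWmem x hx))
  refine ⟨⋃ x ∈ s, W x, ?_, hcover, ?_⟩
  · exact isClopen_biUnion_finset (fun x hx => hB1 _ (hWB x (hsK x hx)))
  · exact Set.iUnion₂_subset fun x hx => hWsub x (hsK x hx)

/-- Key half: `μ(φ + c) ≤ μ(φ) + c`. -/
lemma maxMinMeasure_key {X : Type*} [TopologicalSpace X] [CompactSpace X]
    (hzd : ∃ B : Set (Set X), (∀ s ∈ B, IsClopen s) ∧
      TopologicalSpace.IsTopologicalBasis B)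
    (μ : C(X, ℝ) → ℝ) (hμ : IsMaxMinMeasure μ) (φ : C(X, ℝ)) (c : ℝ) (hc : 0 < c) :
    μ (φ + ContinuousMap.const X c) ≤ μ φ + c := by
  obtain ⟨hconst, hsup, hinf⟩ := hμ
  have mono : ∀ f g : C(X, ℝ), f ≤ g → μ f ≤ μ g := by
    intro f g h
    have := hsup f g
    rw [sup_eq_right.mpr h] at this
    rw [this]
    exact le_max_left _ _
  set t := μ (φ + ContinuousMap.const X c) with ht
  -- suffices: ∀ ε > 0, t - c - 2ε ≤ μ φ
  have main : ∀ ε : ℝ, 0 < ε → t - c - 2 * ε ≤ μ φ := by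
    intro ε hε
    -- clopen interposition
    have hKcl : IsClosed {x : X | t - ε ≤ φ x + c} :=
      isClosed_le continuous_const (by continuity)
    have hVop : IsOpen {x : X | t - 2 * ε < φ x + c} :=
      isOpen_lt continuous_const (by continuity)
    obtain ⟨U, hU, hKU, hUV⟩ := exists_clopen_between hzd hKcl.isCompact hVop
      (fun x hx => by simp only [Set.mem_setOf_eq] at hx ⊢; linarith)
    -- lower bound m for φ
    have hbdd : BddBelow (Set.range φ) := (isCompact_range φ.continuous).bddBelow
    set m : ℝ := min (sInf (Set.range φ)) (t - c - 2 * ε) with hm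
    have hmφ : ∀ x, m ≤ φ x := fun x =>
      min_le_of_left_le (csInf_le hbdd ⟨x, rfl⟩)
    have hmt : m ≤ t - c - 2 * ε := min_le_right _ _
    set ψ : C(X, ℝ) := stepFn U hU t m with hψ
    -- t ⊓ (φ + c) ≤ ψ ⊔ (t - ε)
    have hle1 : ContinuousMap.const X t ⊓ (φ + ContinuousMap.const X c) ≤
        ψ ⊔ ContinuousMap.const X (t - ε) := by
      rw [ContinuousMap.le_def]
      intro x
      simp only [ContinuousMap.inf_apply, ContinuousMap.sup_apply,
        ContinuousMap.add_apply, ContinuousMap.const_apply, hψ]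
      by_cases hx : x ∈ U
      · rw [stepFn_of_mem hU t m hx]
        exact le_max_of_le_left (min_le_left _ _)
      · have : ¬ (t - ε ≤ φ x + c) := fun h => hx (hKU h)
        exact le_max_of_le_right (le_trans (min_le_right _ _) (by linarith))
    have hμψ : t ≤ μ ψ := by
      have h1 : μ (ContinuousMap.const X t ⊓ (φ + ContinuousMap.const X c)) = t := by
        rw [hinf, ← ht, min_self]
      have h2 := mono _ _ hle1
      rw [h1] at h2
      have h3 : μ (ψ ⊔ ContinuousMap.const X (t - ε)) = max (μ ψ) (t - ε) := by
        rw [hsup, hconst]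
      rw [h3] at h2
      rcases max_cases (μ ψ) (t - ε) with ⟨he, _⟩ | ⟨he, _⟩
      · rw [he] at h2; exact h2
      · rw [he] at h2; linarith
    -- f := (t - c - 2ε) ⊓ ψ ≤ φ and μ f = t - c - 2ε
    have hμf : μ (ContinuousMap.const X (t - c - 2 * ε) ⊓ ψ) = t - c - 2 * ε := by
      rw [hinf]
      exact min_eq_left (by linarith)
    have hle2 : ContinuousMap.const X (t - c - 2 * ε) ⊓ ψ ≤ φ := by
      rw [ContinuousMap.le_def]
      intro x
      simp only [ContinuousMap.inf_apply, ContinuousMap.const_apply, hψ]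
      by_cases hx : x ∈ U
      · have : t - 2 * ε < φ x + c := hUV hx
        exact le_trans (min_le_left _ _) (by linarith)
      · rw [stepFn_of_not_mem hU t m hx]
        exact le_trans (min_le_right _ _) (hmφ x)
    have := mono _ _ hle2
    rw [hμf] at this
    exact this
  -- let ε → 0
  by_contra h
  push_neg at h
  have hε : 0 < (t - (μ φ + c)) / 4 := by linarith
  have := main _ hε
  linarith

/-- on a zero-dimensional compact Hausdorff space (one whose topology
has a base of clopen sets), every max-min measure satisfies
`μ(φ + c) ≤ μ(φ) + c` and `μ(φ) - c ≤ μ(φ - c)` for every `c > 0`. -/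
theorem maxMinMeasure_translation_ineq_zeroDim
    {X : Type*} [TopologicalSpace X] [CompactSpace X] [T2Space X]
    (hzd : ∃ B : Set (Set X), (∀ s ∈ B, IsClopen s) ∧
      TopologicalSpace.IsTopologicalBasis B)
    (μ : C(X, ℝ) → ℝ) (hμ : IsMaxMinMeasure μ) (φ : C(X, ℝ)) (c : ℝ) (hc : 0 < c) :
    μ (φ + ContinuousMap.const X c) ≤ μ φ + c ∧
      μ φ - c ≤ μ (φ - ContinuousMap.const X c) := by
  refine ⟨maxMinMeasure_key hzd μ hμ φ c hc, ?_⟩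
  have h2 := maxMinMeasure_key hzd μ hμ (φ - ContinuousMap.const X c) c hc
  have heq : (φ - ContinuousMap.const X c) + ContinuousMap.const X c = φ := by
    ext x; simp
  rw [heq] at h2
  linarith
end

section
/- Let f : Z → X be a continuous map of compact Hausdorff spaces and suppose there is a family (s(x))_{x∈X} of max-min measures on Z such that: (i) for every x ∈ X and all φ, ψ ∈ C(Z) with φ = ψ on f⁻¹(x), one has s(x)(φ) = s(x)(ψ); and (ii) for every φ ∈ C(Z), the function x ↦ s(x)(φ) is continuous on X. Then for every max-min measure μ on X there exists a max-min measure ν on Z such that ν(φ ∘ f) = μ(φ) for all φ ∈ C(X); that is, the pushforward map J(f) : J(Z) → J(X) is surjective. -/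
/-- if `f : Z → X` is a max-min Milyutin map (witnessed by the family
`s` of fiber-supported max-min measures depending continuously on the point), then
the pushforward `J(f) : J(Z) → J(X)` is surjective: every max-min measure `μ` on
`X` is of the form `ν ∘ (· ∘ f)` for some max-min measure `ν` on `Z`. -/
theorem maxMin_milyutin_pushforward_surjective
    {Z X : Type*} [TopologicalSpace Z] [CompactSpace Z] [T2Space Z]
    [TopologicalSpace X] [CompactSpace X] [T2Space X]
    (f : C(Z, X)) (s : X → (C(Z, ℝ) → ℝ))
    (hs : ∀ x, IsMaxMinMeasure (s x))
    (hfib : ∀ (x : X) (φ ψ : C(Z, ℝ)), (∀ z, f z = x → φ z = ψ z) → s x φ = s x ψ)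
    (hcont : ∀ φ : C(Z, ℝ), Continuous fun x => s x φ)
    (μ : C(X, ℝ) → ℝ) (hμ : IsMaxMinMeasure μ) :
    ∃ ν : C(Z, ℝ) → ℝ, IsMaxMinMeasure ν ∧ ∀ φ : C(X, ℝ), ν (φ.comp f) = μ φ := by
  refine ⟨fun φ => μ ⟨fun x => s x φ, hcont φ⟩, ⟨?_, ?_, ?_⟩, ?_⟩
  · intro c
    have h : (⟨fun x => s x (ContinuousMap.const Z c), hcont _⟩ : C(X, ℝ)) =
        ContinuousMap.const X c := by
      ext x; exact (hs x).1 c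
    show μ ⟨fun x => s x (ContinuousMap.const Z c), hcont _⟩ = c
    rw [h]; exact hμ.1 c
  · intro φ ψ
    have h : (⟨fun x => s x (φ ⊔ ψ), hcont _⟩ : C(X, ℝ)) =
        (⟨fun x => s x φ, hcont φ⟩ : C(X, ℝ)) ⊔ ⟨fun x => s x ψ, hcont ψ⟩ := by
      ext x; exact (hs x).2.1 φ ψ
    show μ ⟨fun x => s x (φ ⊔ ψ), hcont _⟩ = _
    rw [h]; exact hμ.2.1 _ _
  · intro c φ
    have h : (⟨fun x => s x (ContinuousMap.const Z c ⊓ φ), hcont _⟩ : C(X, ℝ)) =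
        ContinuousMap.const X c ⊓ ⟨fun x => s x φ, hcont φ⟩ := by
      ext x; exact (hs x).2.2 c φ
    show μ ⟨fun x => s x (ContinuousMap.const Z c ⊓ φ), hcont _⟩ = _
    rw [h]; exact hμ.2.2 _ _
  · intro φ
    have h : (⟨fun x => s x (φ.comp f), hcont _⟩ : C(X, ℝ)) = φ := by
      ext x
      show s x (φ.comp f) = φ x
      have h1 : s x (φ.comp f) = s x (ContinuousMap.const Z (φ x)) := by
        apply hfib; intro z hz; simp [hz]
      rw [h1]; exact (hs x).1 (φ x)
    show μ ⟨fun x => s x (φ.comp f), hcont _⟩ = μ φ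
    rw [h]
end

section
/- Let X be a compact Hausdorff space. The max-min measures of finite support are dense in J(X): for every max-min measure μ on X, every φ₁,…,φₖ ∈ C(X) and every ε > 0, there exist n ∈ ℕ, points x₁,…,xₙ ∈ X and λ₁,…,λₙ ∈ ℝ ∪ {+∞} with maxᵢ λᵢ = +∞ such that |μ(φⱼ) - maxᵢ min(λᵢ, φⱼ(xᵢ))| < ε for every j = 1,…,k. -/
/-! For each `φⱼ` pick a point `xⱼ` where `φⱼ` nearly reaches `μ φⱼ` but every `φᵢ` with
`μ φᵢ` well below `μ φⱼ` stays nearly below `μ φᵢ`, and a point `x₀` where every `φᵢ` stays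
nearly below `μ φᵢ`; then `φ ↦ max (φ x₀) (maxⱼ min (μ φⱼ) (φ xⱼ))` is `ε`-close to `μ` on
the `φᵢ`. Such points exist because a max-min measure does not see sets on which a function
exceeds its value: if every point where `θ ≥ β` lies in some superlevel set `{φᵢ ≥ cᵢ}` with
`μ φᵢ < cᵢ`, then `μ θ ≤ max β (maxᵢ μ φᵢ)`. -/

namespace IsMaxMinMeasure

variable {X : Type*} [TopologicalSpace X] {μ : C(X, ℝ) → ℝ}

theorem monotone (hμ : IsMaxMinMeasure μ) : Monotone μ := fun φ ψ h => by
  simpa [sup_eq_right.mpr h] using (hμ.2.1 φ ψ).ge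

/-- Truncating `θ` at level `t := min c (μ θ)` and adding `ψ` yields a function of measure
`t` that is dominated by `β ⊔ ψ`. -/
theorem le_max_of_superlevel_subset (hμ : IsMaxMinMeasure μ) {θ ψ : C(X, ℝ)} {β c : ℝ}
    (hβc : β < c) (hψc : μ ψ < c) (hsub : ∀ x, β ≤ θ x → c ≤ ψ x) :
    μ θ ≤ max β (μ ψ) := by
  by_contra! hθ
  set t := min c (μ θ)
  have htθ : t ≤ μ θ := min_le_right _ _
  have hβt : β < t := lt_min hβc ((le_max_left _ _).trans_lt hθ)
  have hψt : μ ψ < t := lt_min hψc ((le_max_right _ _).trans_lt hθ)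
  have hval : μ ((ContinuousMap.const X t ⊓ θ) ⊔ ψ) = t := by
    rw [hμ.2.1, hμ.2.2, min_eq_left htθ, max_eq_left hψt.le]
  have hle : (ContinuousMap.const X t ⊓ θ) ⊔ ψ ≤ ContinuousMap.const X β ⊔ ψ := by
    refine ContinuousMap.le_def.mpr fun x => ?_
    simp only [ContinuousMap.sup_apply, ContinuousMap.inf_apply, ContinuousMap.const_apply]
    rcases le_or_gt β (θ x) with h | h
    · exact max_le (((min_le_left _ _).trans ((min_le_left _ _).trans (hsub x h))).trans
        (le_max_right _ _)) (le_max_right _ _)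
    · exact sup_le_sup_right ((min_le_right _ _).trans h.le) _
  have := hμ.monotone hle
  rw [hval, hμ.2.1, hμ.1] at this
  exact this.not_gt (max_lt hβt hψt)

/-- Take `v = μ φ + K (φ - d)` with `μ φ < d < c` and `K` large: `v ≥ μ φ` only where
`φ ≥ d`, so `μ v ≤ μ φ` by `le_max_of_superlevel_subset`. -/
theorem exists_ge_on_superlevel (hμ : IsMaxMinMeasure μ) {φ : C(X, ℝ)} {c : ℝ}
    (hc : μ φ < c) (C : ℝ) : ∃ v : C(X, ℝ), μ v ≤ μ φ ∧ ∀ x, c ≤ φ x → C ≤ v x := by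
  set d := (μ φ + c) / 2
  have hdc : 0 < c - d := by simp only [d]; linarith
  set K := |C - μ φ| / (c - d) + 1
  have hK : 0 < K := by positivity
  have hKc : |C - μ φ| ≤ K * (c - d) := by
    simp only [K, add_mul, div_mul_cancel₀ _ hdc.ne']
    linarith
  let v := ContinuousMap.const X (μ φ) + K • (φ - ContinuousMap.const X d)
  have hv : ∀ x, v x = μ φ + K * (φ x - d) := fun x => rfl
  refine ⟨v, ?_, fun x hx => ?_⟩
  · refine (hμ.le_max_of_superlevel_subset (c := d) (by simp only [d]; linarith)
      (by simp only [d]; linarith) fun x hx => ?_).trans (max_self _).le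
    rw [hv] at hx
    nlinarith
  · rw [hv]
    nlinarith [le_abs_self (C - μ φ)]

theorem exists_ge_on_superlevel_union (hμ : IsMaxMinMeasure μ) {ι : Type*} (S : Finset ι)
    {φ : ι → C(X, ℝ)} {c : ι → ℝ} {m : ℝ} (hc : ∀ j ∈ S, μ (φ j) < c j)
    (hm : ∀ j ∈ S, μ (φ j) < m) (C : ℝ) :
    ∃ ψ : C(X, ℝ), μ ψ < m ∧ ∀ x, ∀ j ∈ S, c j ≤ φ j x → C ≤ ψ x := by
  classical
  induction S using Finset.induction_on with
  | empty => exact ⟨ContinuousMap.const X (m - 1), by simp [hμ.1], by simp⟩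
  | insert i S _ ih =>
    simp only [Finset.mem_insert, forall_eq_or_imp] at hc hm
    obtain ⟨ψ, hψm, hψ⟩ := ih hc.2 hm.2
    obtain ⟨v, hvφ, hv⟩ := hμ.exists_ge_on_superlevel hc.1 C
    refine ⟨ψ ⊔ v, by rw [hμ.2.1]; exact max_lt hψm (hvφ.trans_lt hm.1), fun x j hj hjx => ?_⟩
    rcases Finset.mem_insert.mp hj with rfl | hj
    · exact (hv x hjx).trans (le_sup_right (a := ψ x))
    · exact (hψ x j hj hjx).trans (le_sup_left (b := v x))

theorem exists_ge_and_forall_lt (hμ : IsMaxMinMeasure μ) {θ : C(X, ℝ)} {β : ℝ}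
    (hβ : β < μ θ) {ι : Type*} (S : Finset ι) {φ : ι → C(X, ℝ)} {c : ι → ℝ}
    (hc : ∀ j ∈ S, μ (φ j) < c j) (hθ : ∀ j ∈ S, μ (φ j) < μ θ) :
    ∃ x, β ≤ θ x ∧ ∀ j ∈ S, φ j x < c j := by
  by_contra! hcov
  obtain ⟨ψ, hψθ, hψ⟩ := hμ.exists_ge_on_superlevel_union S hc hθ (μ θ + 1)
  have := hμ.le_max_of_superlevel_subset (by linarith) (by linarith) fun x hx =>
    let ⟨j, hj, hjx⟩ := hcov x hx
    hψ x j hj hjx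
  exact this.not_gt (max_lt hβ hψθ)

end IsMaxMinMeasure

theorem EReal.abs_sub_toReal_le {a δ : ℝ} {s : EReal} (hlo : ((a - δ : ℝ) : EReal) ≤ s)
    (hhi : s ≤ ((a + δ : ℝ) : EReal)) : |a - s.toReal| ≤ δ := by
  have hs : ((s.toReal : ℝ) : EReal) = s :=
    EReal.coe_toReal (ne_top_of_le_ne_top (EReal.coe_ne_top _) hhi)
      (ne_bot_of_le_ne_bot (EReal.coe_ne_bot _) hlo)
  rw [← hs, EReal.coe_le_coe_iff] at hlo hhi
  exact abs_sub_le_iff.mpr ⟨by linarith, by linarith⟩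

theorem maxMinMeasure_finiteSupport_dense_general
    {X : Type*} [TopologicalSpace X]
    (μ : C(X, ℝ) → ℝ) (hμ : IsMaxMinMeasure μ)
    (k : ℕ) (φ : Fin k → C(X, ℝ)) (ε : ℝ) (hε : 0 < ε) :
    ∃ (n : ℕ) (x : Fin n → X) (lam : Fin n → EReal),
      (∀ i, lam i ≠ ⊥) ∧ (∃ i, lam i = ⊤) ∧
      ∀ j, |μ (φ j) - (⨆ i, min (lam i) ((φ j (x i) : ℝ) : EReal)).toReal| < ε := by
  have hδ : 0 < ε / 2 := half_pos hε
  obtain ⟨M, hM⟩ := (Set.finite_range fun j => μ (φ j)).bddAbove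
  obtain ⟨x₀, -, hx₀⟩ := hμ.exists_ge_and_forall_lt (θ := ContinuousMap.const X (M + 1))
    (β := M) (by simp [hμ.1]) Finset.univ (φ := φ) (c := fun j => μ (φ j) + ε / 2)
    (fun j _ => by linarith) (fun j _ => by simp only [hμ.1]; linarith [hM ⟨j, rfl⟩])
  have hpts : ∀ j₀, ∃ x, μ (φ j₀) - ε / 2 ≤ φ j₀ x ∧
      ∀ j, μ (φ j) + ε / 2 ≤ μ (φ j₀) → φ j x < μ (φ j) + ε / 2 := fun j₀ => by
    simpa using hμ.exists_ge_and_forall_lt (β := μ (φ j₀) - ε / 2) (by linarith)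
      {j | μ (φ j) + ε / 2 ≤ μ (φ j₀)} (φ := φ) (c := fun j => μ (φ j) + ε / 2)
      (fun j _ => by linarith) (fun j hj => by simp only [Finset.mem_filter] at hj; linarith)
  choose xs hxs_ge hxs_lt using hpts
  refine ⟨k + 1, Fin.cons x₀ xs, Fin.cons ⊤ fun j => (μ (φ j) : EReal), ?_, ⟨0, rfl⟩,
    fun j => (EReal.abs_sub_toReal_le ?_ ?_).trans_lt (half_lt_self hε)⟩
  · exact Fin.cases (by simp) (by simp)
  · refine le_iSup_of_le j.succ ?_
    rw [Fin.cons_succ, Fin.cons_succ]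
    exact le_min (EReal.coe_le_coe_iff.mpr (by linarith)) (EReal.coe_le_coe_iff.mpr (hxs_ge j))
  · refine iSup_le (Fin.cases ?_ fun j₀ => ?_)
    · exact min_le_of_right_le (EReal.coe_le_coe_iff.mpr (hx₀ j (Finset.mem_univ j)).le)
    · rw [Fin.cons_succ, Fin.cons_succ]
      rcases lt_or_ge (μ (φ j₀)) (μ (φ j) + ε / 2) with h | h
      · exact min_le_of_left_le (EReal.coe_le_coe_iff.mpr h.le)
      · exact min_le_of_right_le (EReal.coe_le_coe_iff.mpr (hxs_lt j₀ j h).le)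

/-- the max-min measures of finite support are weak*-dense in `J(X)`:
every basic weak* neighbourhood `O(μ; φ₁, …, φₖ; ε)` of a max-min measure `μ`
contains a finitely supported max-min measure `φ ↦ maxᵢ min (λᵢ) (φ (xᵢ))` with
`λᵢ ∈ ℝ ∪ {+∞}` and `maxᵢ λᵢ = +∞`. -/
theorem maxMinMeasure_finiteSupport_dense
    {X : Type*} [TopologicalSpace X] [CompactSpace X] [T2Space X]
    (μ : C(X, ℝ) → ℝ) (hμ : IsMaxMinMeasure μ)
    (k : ℕ) (φ : Fin k → C(X, ℝ)) (ε : ℝ) (hε : 0 < ε) :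
    ∃ (n : ℕ) (x : Fin n → X) (lam : Fin n → EReal),
      (∀ i, lam i ≠ ⊥) ∧ (∃ i, lam i = ⊤) ∧
      ∀ j, |μ (φ j) - (⨆ i, min (lam i) ((φ j (x i) : ℝ) : EReal)).toReal| < ε :=
  maxMinMeasure_finiteSupport_dense_general μ hμ k φ ε hε
end

section
/- Let X be a compact Hausdorff space. Then every max-min measure μ on X is continuous as a map from the Banach space C(X) (with the sup-norm) to ℝ; indeed, |μ(φ) - μ(ψ)| ≤ ‖φ - ψ‖ for all φ, ψ ∈ C(X). -/
/-- every max-min measure on a compact Hausdorff space is continuous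
as a map from the Banach space `C(X)` (sup-norm) to `ℝ`; indeed it is
1-Lipschitz: `|μ φ - μ ψ| ≤ ‖φ - ψ‖`. -/
theorem maxMinMeasure_continuous
    {X : Type*} [TopologicalSpace X] [CompactSpace X] [T2Space X]
    (μ : C(X, ℝ) → ℝ) (hμ : IsMaxMinMeasure μ) :
    Continuous μ ∧ ∀ φ ψ : C(X, ℝ), |μ φ - μ ψ| ≤ ‖φ - ψ‖ := by
  obtain ⟨hc, hsup, hinf⟩ := hμ
  -- monotonicity of μ
  have mono : ∀ φ ψ : C(X, ℝ), φ ≤ ψ → μ φ ≤ μ ψ := by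
    intro φ ψ h
    have hs : φ ⊔ ψ = ψ := sup_eq_right.mpr h
    have h2 := hsup φ ψ
    rw [hs] at h2
    rw [h2]
    exact le_max_left _ _
  -- Lemma L : if θ dominates ρ on the set where ρ > c'' (with c'' < μ ρ), then μ ρ ≤ μ θ
  have L : ∀ (ρ θ : C(X, ℝ)) (c'' : ℝ), c'' < μ ρ →
      (∀ x, c'' < ρ x → ρ x ≤ θ x) → μ ρ ≤ μ θ := by
    intro ρ θ c'' hlt hdom
    have hle : ρ ≤ (ContinuousMap.const X c'' ⊓ ρ) ⊔ θ := by
      intro x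
      simp only [ContinuousMap.sup_apply, ContinuousMap.inf_apply,
        ContinuousMap.const_apply]
      rcases le_or_gt (ρ x) c'' with h | h
      · exact le_max_of_le_left (le_min h le_rfl)
      · exact le_max_of_le_right (hdom x h)
    have hm := mono _ _ hle
    rw [hsup, hinf, min_eq_left hlt.le] at hm
    rcases le_max_iff.mp hm with h | h
    · exact absurd h (not_le.mpr hlt)
    · exact h
  -- Lemma L2 : if θ ≥ c on the set where ρ > c'' (with c'' < c ≤ μ ρ), then c ≤ μ θ
  have L2 : ∀ (ρ θ : C(X, ℝ)) (c'' c : ℝ), c'' < c → c ≤ μ ρ →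
      (∀ x, c'' < ρ x → c ≤ θ x) → c ≤ μ θ := by
    intro ρ θ c'' c h1 h2 hdom
    have hμρc : μ (ContinuousMap.const X c ⊓ ρ) = c := by
      rw [hinf]; exact min_eq_left h2
    have hL := L (ContinuousMap.const X c ⊓ ρ) θ c''
      (by rw [hμρc]; exact h1) ?_
    · rw [hμρc] at hL; exact hL
    · intro x hx
      simp only [ContinuousMap.inf_apply, ContinuousMap.const_apply] at hx ⊢
      have hρ : c'' < ρ x := lt_of_lt_of_le hx (min_le_right _ _)
      exact le_trans (min_le_left _ _) (hdom x hρ)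
  -- main one-sided estimate
  have key : ∀ φ ψ : C(X, ℝ), μ ψ ≤ μ φ + ‖φ - ψ‖ := by
    intro φ ψ
    by_contra hcon
    push_neg at hcon
    set ε := ‖φ - ψ‖ with hε
    set a := μ φ with ha
    set δ := (μ ψ - a - ε) / 3 with hδ
    have hδpos : 0 < δ := by
      have : a + ε < μ ψ := hcon
      rw [hδ]; linarith
    have hεnn : 0 ≤ ε := norm_nonneg _
    have hA : IsClosed {x : X | a + δ ≤ φ x} :=
      isClosed_le continuous_const φ.continuous
    have hD : IsClosed {x : X | φ x ≤ a + δ / 2} :=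
      isClosed_le φ.continuous continuous_const
    have hdisj : Disjoint {x : X | φ x ≤ a + δ / 2} {x : X | a + δ ≤ φ x} := by
      rw [Set.disjoint_left]
      intro x h1 h2
      simp only [Set.mem_setOf_eq] at h1 h2
      linarith
    obtain ⟨u, hu0, hu1, hu01⟩ := exists_continuous_zero_one_of_isClosed hD hA hdisj
    set c := a + ε + 2 * δ with hcdef
    set θ : C(X, ℝ) := ContinuousMap.const X a + (c - a) • u with hθ
    have hθ_apply : ∀ x, θ x = a + (c - a) * u x := by
      intro x
      simp [hθ]
    have hpt : ∀ x, |φ x - ψ x| ≤ ε := by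
      intro x
      have h1 : |φ x - ψ x| = ‖(φ - ψ) x‖ := by simp
      rw [h1, hε]
      exact ContinuousMap.norm_coe_le_norm _ x
    have step3 : c ≤ μ θ := by
      apply L2 ψ θ (a + ε + δ) c (by rw [hcdef]; linarith) (by rw [hcdef, hδ]; linarith)
      intro x hx
      have hφx : a + δ ≤ φ x := by
        have h2 := (abs_le.mp (hpt x)).1
        linarith
      have hux : u x = 1 := hu1 hφx
      rw [hθ_apply x, hux]
      ring_nf
      linarith
    have step4 : a + δ / 2 ≤ μ φ := by
      apply L2 θ φ a (a + δ / 2) (by linarith) (by linarith)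
      intro x hx
      rw [hθ_apply x] at hx
      have hca : 0 < c - a := by rw [hcdef]; linarith
      have hupos : 0 < u x := by
        by_contra hle
        push_neg at hle
        have h0 : u x = 0 := le_antisymm hle (hu01 x).1
        rw [h0, mul_zero, add_zero] at hx
        exact lt_irrefl a hx
      have hxD : x ∉ {x : X | φ x ≤ a + δ / 2} := by
        intro hmem
        have h0 : u x = 0 := hu0 hmem
        rw [h0] at hupos
        exact lt_irrefl 0 hupos
      simp only [Set.mem_setOf_eq, not_le] at hxD
      linarith
    rw [← ha] at step4
    linarith
  have key2 : ∀ φ ψ : C(X, ℝ), |μ φ - μ ψ| ≤ ‖φ - ψ‖ := by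
    intro φ ψ
    rw [abs_sub_le_iff]
    constructor
    · have h1 := key ψ φ
      have h2 : ‖ψ - φ‖ = ‖φ - ψ‖ := norm_sub_rev _ _
      linarith
    · have h1 := key φ ψ
      linarith
  refine ⟨?_, key2⟩
  have lip : LipschitzWith 1 μ := by
    apply LipschitzWith.of_dist_le_mul
    intro x y
    rw [Real.dist_eq, dist_eq_norm, NNReal.coe_one, one_mul]
    exact key2 x y
  exact lip.continuous
end

section
/- Let X be a compact Hausdorff space and let J(X) (a compact Hausdorff space in the weak* topology) be the space of max-min measures on X. For φ ∈ C(X), let φ̄ ∈ C(J(X)) be the continuous function φ̄(μ) = μ(φ). If M is a max-min measure on the space J(X), then the functional ψ_X(M) : C(X) → ℝ defined by ψ_X(M)(φ) = M(φ̄) is a max-min measure on X. -/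
/-- The space `J(X)` of max-min measures on `X`, with the weak* topology
(subspace of the product topology on `ℝ^{C(X)}`). -/
abbrev MaxMinMeasureSpace (X : Type*) [TopologicalSpace X] : Type _ :=
  {μ : C(X, ℝ) → ℝ // IsMaxMinMeasure μ}

/-- For `φ ∈ C(X)`, the continuous function `φ̄ : J(X) → ℝ`, `μ ↦ μ(φ)`. -/
def barFun {X : Type*} [TopologicalSpace X] (φ : C(X, ℝ)) :
    C(MaxMinMeasureSpace X, ℝ) :=
  ⟨fun μ => μ.1 φ, (continuous_apply φ).comp continuous_subtype_val⟩

/-- if `M` is a max-min measure on the compact Hausdorff space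
`J(X)`, then `ψ_X(M) : φ ↦ M(φ̄)` is a max-min measure on `X`. -/
theorem psi_isMaxMinMeasure
    {X : Type*} [TopologicalSpace X] [CompactSpace X] [T2Space X]
    (M : C(MaxMinMeasureSpace X, ℝ) → ℝ) (hM : IsMaxMinMeasure M) :
    IsMaxMinMeasure (fun φ : C(X, ℝ) => M (barFun φ)) := by
  obtain ⟨hc, hsup, hinf⟩ := hM
  refine ⟨fun c => ?_, fun φ ψ => ?_, fun c φ => ?_⟩
  · have : barFun (ContinuousMap.const X c) =
        ContinuousMap.const (MaxMinMeasureSpace X) c := by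
      ext μ; exact μ.2.1 c
    simp only [this, hc]
  · have : barFun (φ ⊔ ψ) = barFun φ ⊔ barFun ψ := by
      ext μ; exact μ.2.2.1 φ ψ
    simp only [this, hsup]
  · have : barFun (ContinuousMap.const X c ⊓ φ) =
        ContinuousMap.const (MaxMinMeasureSpace X) c ⊓ barFun φ := by
      ext μ; exact μ.2.2.2 c φ
    simp only [this, hinf]
end

section
/- Let X be a compact Hausdorff space. The set J(X) of max-min measures on X is a max-min convex subset of ℝ^{C(X)}: for all max-min measures μ, ν on X and every λ ∈ ℝ, the functional φ ↦ max(μ(φ), min(λ, ν(φ))) is again a max-min measure on X. -/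
/-- `J(X)` is a max-min convex subset of `ℝ^{C(X)}`: for max-min
measures `μ, ν` and `λ ∈ ℝ`, the functional `φ ↦ max (μ φ) (min λ (ν φ))` is
again a max-min measure. -/
theorem maxMinMeasure_maxMinConvex
    {X : Type*} [TopologicalSpace X] [CompactSpace X] [T2Space X]
    (μ ν : C(X, ℝ) → ℝ) (hμ : IsMaxMinMeasure μ) (hν : IsMaxMinMeasure ν)
    (lam : ℝ) :
    IsMaxMinMeasure (fun φ : C(X, ℝ) => max (μ φ) (min lam (ν φ))) := by
  obtain ⟨hμc, hμs, hμi⟩ := hμ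
  obtain ⟨hνc, hνs, hνi⟩ := hν
  refine ⟨fun c => ?_, fun φ ψ => ?_, fun c φ => ?_⟩
  · simp [hμc, hνc]
  · simp only [hμs, hνs, min_max_distrib_left]
    exact max_max_max_comm _ _ _ _
  · simp only [hμi, hνi, min_max_distrib_left]
    rw [min_left_comm]
end

section
/- Let τ be an index set and let A ⊆ ℝ^τ be a compact max-min convex set (with the product topology on ℝ^τ). For α ∈ τ, let p_α : A → ℝ denote the (continuous) coordinate projection. Then for every max-min measure μ on the compact Hausdorff space A, the point ξ(μ) = (μ(p_α))_{α ∈ τ} belongs to A; that is, the max-min barycenter map ξ : J(A) → ℝ^τ takes its values in A. -/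
namespace MaxMinAux

variable {τ : Type*} {A : Set (τ → ℝ)}

/-- The coordinate projection as a continuous map on `A`. -/
def proj (A : Set (τ → ℝ)) (α : τ) : C(A, ℝ) :=
  ⟨fun a => a.1 α, (continuous_apply α).comp continuous_subtype_val⟩

lemma mono {μ : C(A, ℝ) → ℝ} (hμ : IsMaxMinMeasure μ) {φ ψ : C(A, ℝ)} (h : φ ≤ ψ) :
    μ φ ≤ μ ψ := by
  have h2 : μ (φ ⊔ ψ) = max (μ φ) (μ ψ) := hμ.2.1 φ ψ
  rw [sup_eq_right.mpr h] at h2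
  rw [h2]; exact le_max_left _ _

lemma le_const {μ : C(A, ℝ) → ℝ} (hμ : IsMaxMinMeasure μ) {φ : C(A, ℝ)} {K : ℝ}
    (h : ∀ x, φ x ≤ K) : μ φ ≤ K := by
  have := mono hμ (show φ ≤ ContinuousMap.const _ K from ContinuousMap.le_def.mpr h)
  rwa [hμ.1] at this

lemma const_le {μ : C(A, ℝ) → ℝ} (hμ : IsMaxMinMeasure μ) {φ : C(A, ℝ)} {K : ℝ}
    (h : ∀ x, K ≤ φ x) : K ≤ μ φ := by
  have := mono hμ (show ContinuousMap.const _ K ≤ φ from ContinuousMap.le_def.mpr h)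
  rwa [hμ.1] at this

lemma nonempty_of {μ : C(A, ℝ) → ℝ} (hμ : IsMaxMinMeasure μ) : A.Nonempty := by
  by_contra h
  rw [Set.not_nonempty_iff_eq_empty] at h
  haveI : IsEmpty ↥A := Set.isEmpty_coe_sort.mpr h
  have e : ContinuousMap.const ↥A (0 : ℝ) = ContinuousMap.const ↥A 1 := by
    ext x; exact isEmptyElim x
  have h0 := hμ.1 0
  have h1 := hμ.1 1
  rw [e] at h0
  exact zero_ne_one (h0.symm.trans h1)

lemma mu_sup' {μ : C(A, ℝ) → ℝ} (hμ : IsMaxMinMeasure μ) {ι : Type*} (s : Finset ι)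
    (hs : s.Nonempty) (f : ι → C(A, ℝ)) :
    μ (s.sup' hs f) = s.sup' hs fun i => μ (f i) := by
  classical
  induction s using Finset.cons_induction with
  | empty => exact absurd hs (by simp)
  | cons a s ha ih =>
    rcases s.eq_empty_or_nonempty with rfl | hs'
    · simp
    · rw [Finset.sup'_cons hs', Finset.sup'_cons hs' (fun i => μ (f i)), hμ.2.1, ih hs']

/-- The key localization ("tent") lemma. -/
theorem tent (hA : IsCompact A) {μ : C(A, ℝ) → ℝ} (hμ : IsMaxMinMeasure μ)
    (F : Finset τ) {ε : ℝ} (hε : 0 < ε) {c : ℝ} {φ₀ : C(A, ℝ)}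
    (hφc : ∀ x, φ₀ x ≤ c) (hμφ : μ φ₀ = c) :
    ∃ v : A, c - ε ≤ φ₀ v ∧
      ∀ β ∈ F, μ (proj A β) + ε ≤ c → (v : τ → ℝ) β ≤ μ (proj A β) + ε := by
  classical
  haveI : CompactSpace A := isCompact_iff_compactSpace.mp hA
  obtain ⟨x₀, hx₀⟩ := nonempty_of hμ
  -- coordinate bounds
  have hKex : ∀ β : τ, ∃ k : ℝ, 0 ≤ k ∧ ∀ x : A, |(x : τ → ℝ) β| ≤ k := by
    intro β
    obtain ⟨k, hk⟩ := (hA.image ((continuous_apply β).abs)).bddAbove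
    refine ⟨max k 0, le_max_right _ _, fun x => ?_⟩
    exact le_trans (hk ⟨(x : τ → ℝ), x.2, rfl⟩) (le_max_left _ _)
  set K : τ → ℝ := fun β => (hKex β).choose with hKdef
  have hK0 : ∀ β, 0 ≤ K β := fun β => (hKex β).choose_spec.1
  have hKb : ∀ β (x : A), |(x : τ → ℝ) β| ≤ K β := fun β => (hKex β).choose_spec.2
  -- lower bound of φ₀
  obtain ⟨L, hL⟩ := (isCompact_range φ₀.continuous).bddBelow
  have hLφ : ∀ x : A, L ≤ φ₀ x := fun x => hL ⟨x, rfl⟩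
  set M : ℝ := 1 + |c| + |L| + ∑ β ∈ F, K β with hMdef
  have hsum0 : (0:ℝ) ≤ ∑ β ∈ F, K β := Finset.sum_nonneg fun β _ => hK0 β
  have hM1 : 1 ≤ M := by
    have := abs_nonneg c; have := abs_nonneg L; simp only [hMdef]; linarith
  have hφM : ∀ x : A, φ₀ x ≤ M := fun x => by
    have h1 := hφc x; have h2 := le_abs_self c; have := abs_nonneg L; simp only [hMdef]; linarith
  have hφM' : ∀ x : A, -M ≤ φ₀ x := fun x => by
    have h1 := hLφ x; have h2 := neg_abs_le L; have := abs_nonneg c; simp only [hMdef]; linarith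
  have hKM : ∀ β ∈ F, K β ≤ M := fun β hβ => by
    have := Finset.single_le_sum (fun (i : τ) (_ : i ∈ F) => hK0 i) hβ
    have := abs_nonneg c; have := abs_nonneg L; simp only [hMdef]; linarith
  have hbM : ∀ β ∈ F, -M ≤ μ (proj A β) := by
    intro β hβ
    refine const_le hμ fun x => ?_
    have h1 := hKb β x
    have h2 := hKM β hβ
    have h3 := abs_le.mp h1
    simp only [proj, ContinuousMap.coe_mk]
    linarith [h3.1]
  -- constants
  set κ : ℝ := min (ε / 12) 1 with hκdef
  have hκ : 0 < κ := lt_min (by linarith) one_pos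
  have hκε : κ ≤ ε / 12 := min_le_left _ _
  have hκ1 : κ ≤ 1 := min_le_right _ _
  set γ : ℝ := 2 * M / κ with hγdef
  have hγ2 : 2 ≤ γ := by
    rw [hγdef, le_div_iff₀ hκ]; nlinarith
  have hγ0 : 0 ≤ γ := by linarith
  -- the distance maps
  set D : (τ → ℝ) → C(A, ℝ) := fun z =>
    ⟨fun x => ∑ β ∈ F, |(x : τ → ℝ) β - z β|,
      continuous_finset_sum _ fun β _ =>
        (((continuous_apply β).comp continuous_subtype_val).sub continuous_const).abs⟩
    with hDdef
  have hD0 : ∀ z (x : A), 0 ≤ D z x := fun z x =>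
    Finset.sum_nonneg fun β _ => abs_nonneg _
  have hDsingle : ∀ z (x : A), ∀ β ∈ F, |(x : τ → ℝ) β - z β| ≤ D z x := by
    intro z x β hβ
    exact Finset.single_le_sum (f := fun i => |(x : τ → ℝ) i - z i|)
      (fun i (_ : i ∈ F) => abs_nonneg _) hβ
  -- cover
  set U : (τ → ℝ) → Set (τ → ℝ) := fun z => {y | (∑ β ∈ F, |y β - z β|) < κ} with hUdef
  have hUopen : ∀ z, IsOpen (U z) := fun z =>
    isOpen_lt (continuous_finset_sum _ fun β _ =>
      ((continuous_apply β).sub continuous_const).abs) continuous_const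
  have hUz : ∀ z, z ∈ U z := fun z => by
    simp only [hUdef, Set.mem_setOf_eq, sub_self, abs_zero, Finset.sum_const_zero]; exact hκ
  obtain ⟨t, htA, hcov⟩ := hA.elim_nhds_subcover U fun z _ => (hUopen z).mem_nhds (hUz z)
  have ht : t.Nonempty := by
    obtain ⟨z, hz⟩ := Set.mem_iUnion₂.mp (hcov hx₀)
    exact ⟨z, hz.1⟩
  -- tents
  set T : (τ → ℝ) → C(A, ℝ) := fun z =>
    φ₀ - γ • ((D z - ContinuousMap.const _ κ) ⊔ 0) with hTdef
  have hTapp : ∀ z (x : A), T z x = φ₀ x - γ * max (D z x - κ) 0 := by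
    intro z x
    simp only [hTdef, ContinuousMap.sub_apply, ContinuousMap.smul_apply,
      ContinuousMap.sup_apply, ContinuousMap.const_apply, ContinuousMap.zero_apply,
      smul_eq_mul]
  have hTle : ∀ z (x : A), T z x ≤ φ₀ x := by
    intro z x
    rw [hTapp]
    have : 0 ≤ γ * max (D z x - κ) 0 := mul_nonneg hγ0 (le_max_right _ _)
    linarith
  have hsup : t.sup' ht T = φ₀ := by
    ext x
    rw [ContinuousMap.sup'_apply]
    apply le_antisymm (Finset.sup'_le _ _ fun z _ => hTle z x)
    obtain ⟨z, hz⟩ := Set.mem_iUnion₂.mp (hcov x.2)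
    obtain ⟨hzt, hzU⟩ := hz
    have hDx : D z x < κ := hzU
    have : T z x = φ₀ x := by
      rw [hTapp, max_eq_right (by linarith), mul_zero, sub_zero]
    calc φ₀ x = T z x := this.symm
      _ ≤ t.sup' ht fun z => T z x := Finset.le_sup' (fun z => T z x) hzt
  have hμsup : t.sup' ht (fun z => μ (T z)) = c := by
    rw [← mu_sup' hμ t ht T, hsup, hμφ]
  obtain ⟨z, hzt, hz⟩ := Finset.exists_mem_eq_sup' ht fun z => μ (T z)
  have hμTz : μ (T z) = c := by rw [← hz, hμsup]
  -- find v
  have hvex : ∃ v : A, c - κ ≤ T z v := by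
    by_contra h
    push_neg at h
    have : μ (T z) ≤ c - κ := le_const hμ fun x => (h x).le
    rw [hμTz] at this; linarith
  obtain ⟨v, hv⟩ := hvex
  have hφv : c - ε ≤ φ₀ v := by
    have := hTle z v; have h12 : κ ≤ ε := by linarith
    linarith
  have hdrop : γ * max (D z v - κ) 0 ≤ κ := by
    have h1 := hTapp z v
    have h2 := hφc v
    linarith
  have hmax : max (D z v - κ) 0 ≤ κ / 2 := by
    have h1 : (2:ℝ) * max (D z v - κ) 0 ≤ γ * max (D z v - κ) 0 :=
      mul_le_mul_of_nonneg_right hγ2 (le_max_right _ _)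
    linarith
  have hDv : D z v ≤ 2 * κ := by
    have := le_max_left (D z v - κ) 0
    linarith
  refine ⟨v, hφv, ?_⟩
  intro β hβ hbc
  by_contra hvb
  push_neg at hvb
  set bβ := μ (proj A β) with hbβ
  set c' := bβ + ε / 2 with hc'
  -- nearby points have large β-coordinate
  have hreg : ∀ x : A, D z x ≤ 4 * κ → c' ≤ (x : τ → ℝ) β := by
    intro x hx
    have h1 := hDsingle z x β hβ
    have h2 := hDsingle z v β hβ
    have h3 : |(x : τ → ℝ) β - (v : τ → ℝ) β| ≤ 6 * κ := by
      calc |(x : τ → ℝ) β - (v : τ → ℝ) β|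
          ≤ |(x : τ → ℝ) β - z β| + |z β - (v : τ → ℝ) β| := abs_sub_le _ _ _
        _ = |(x : τ → ℝ) β - z β| + |(v : τ → ℝ) β - z β| := by rw [abs_sub_comm (z β)]
        _ ≤ 6 * κ := by linarith
    have h4 := (abs_le.mp h3).1
    have h5 : (12:ℝ) * κ ≤ ε := by linarith
    simp only [hc']
    linarith
  -- domination
  have hdom : ContinuousMap.const ↥A c' ⊓ T z ≤
      (ContinuousMap.const ↥A c' ⊓ proj A β) ⊔ ContinuousMap.const ↥A (-M) := by
    rw [ContinuousMap.le_def]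
    intro x
    simp only [ContinuousMap.inf_apply, ContinuousMap.sup_apply, ContinuousMap.const_apply]
    by_cases hx : D z x ≤ 4 * κ
    · have hge := hreg x hx
      have : c' ⊓ (proj A β) x = c' := by
        simp only [proj, ContinuousMap.coe_mk]
        exact min_eq_left hge
      rw [this]
      exact le_sup_of_le_left (inf_le_left)
    · push_neg at hx
      have h3 : 3 * κ ≤ max (D z x - κ) 0 := le_max_of_le_left (by linarith)
      have h6 : 6 * M ≤ γ * max (D z x - κ) 0 := by
        have h7 : γ * (3 * κ) ≤ γ * max (D z x - κ) 0 :=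
          mul_le_mul_of_nonneg_left h3 hγ0
        have h8 : γ * (3 * κ) = 6 * M := by
          rw [hγdef]; field_simp; ring
        linarith
      have hT : T z x ≤ -M := by
        rw [hTapp]
        have := hφM x
        linarith
      refine le_sup_of_le_right ?_
      exact le_trans inf_le_right hT
  have hmuL : μ (ContinuousMap.const ↥A c' ⊓ T z) = c' := by
    rw [hμ.2.2, hμTz, min_eq_left (by simp only [hc']; linarith)]
  have hmuR : μ ((ContinuousMap.const ↥A c' ⊓ proj A β) ⊔ ContinuousMap.const ↥A (-M)) = bβ := by
    rw [hμ.2.1, hμ.2.2, hμ.1, ← hbβ]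
    rw [min_eq_right (by simp only [hc']; linarith)]
    exact max_eq_left (hbM β hβ)
  have := mono hμ hdom
  rw [hmuL, hmuR] at this
  simp only [hc'] at this
  linarith

end MaxMinAux

/-- if `A ⊆ ℝ^τ` is a compact max-min convex set, then for every
max-min measure `μ` on the compact Hausdorff space `A`, the point
`ξ(μ) = (μ(p_α))_{α ∈ τ}` (where `p_α` is the coordinate projection) belongs to
`A`; i.e., the max-min barycenter map `ξ : J(A) → ℝ^τ` takes values in `A`. -/
theorem maxMin_barycenter_mem
    {τ : Type*} (A : Set (τ → ℝ)) (hA : IsCompact A)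
    (hconv : ∀ x ∈ A, ∀ y ∈ A, ∀ lam : ℝ,
      (fun α => max (x α) (min lam (y α))) ∈ A)
    (μ : C(A, ℝ) → ℝ) (hμ : IsMaxMinMeasure μ) :
    (fun α : τ => μ ⟨fun a => a.1 α,
      (continuous_apply α).comp continuous_subtype_val⟩) ∈ A := by
  classical
  obtain ⟨x₀, hx₀⟩ := MaxMinAux.nonempty_of hμ
  set b : τ → ℝ := fun α : τ => μ (MaxMinAux.proj A α) with hbdef
  show b ∈ A
  -- finite approximation
  have key : ∀ (F : Finset τ) (ε : ℝ), 0 < ε → ∃ a ∈ A, ∀ β ∈ F, |a β - b β| ≤ ε := by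
    intro F ε hε
    have main : ∀ S : Finset τ,
        ∃ a ∈ A, (∀ β ∈ F, a β ≤ b β + ε) ∧ ∀ α ∈ S, b α - ε ≤ a α := by
      intro S
      induction S using Finset.induction_on with
      | empty =>
        rcases F.eq_empty_or_nonempty with rfl | hF
        · exact ⟨x₀, hx₀, by simp, by simp⟩
        · set c := 1 + ε + F.sup' hF b with hcdef
          have hc : ∀ β ∈ F, b β + ε ≤ c := by
            intro β hβ
            have := Finset.le_sup' b hβ
            simp only [hcdef]; linarith
          obtain ⟨v, _, hv2⟩ := MaxMinAux.tent hA hμ F hε (c := c)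
            (φ₀ := ContinuousMap.const _ c) (fun x => le_rfl) (hμ.1 c)
          exact ⟨v, v.2, fun β hβ => hv2 β hβ (hc β hβ), by simp⟩
      | @insert α S hαS ih =>
        obtain ⟨a, ha, haU, haL⟩ := ih
        have hφc : ∀ x : A, (ContinuousMap.const ↥A (b α) ⊓ MaxMinAux.proj A α) x ≤ b α := by
          intro x
          simp only [ContinuousMap.inf_apply, ContinuousMap.const_apply]
          exact min_le_left _ _
        have hμφ : μ (ContinuousMap.const ↥A (b α) ⊓ MaxMinAux.proj A α) = b α := by
          rw [hμ.2.2]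
          exact min_self _
        obtain ⟨v, hv1, hv2⟩ := MaxMinAux.tent hA hμ F hε (c := b α)
          (φ₀ := ContinuousMap.const _ (b α) ⊓ MaxMinAux.proj A α) hφc hμφ
        refine ⟨fun γ => max (a γ) (min (b α) ((v : τ → ℝ) γ)),
          hconv a ha (v : τ → ℝ) v.2 (b α), ?_, ?_⟩
        · intro β hβ
          apply max_le (haU β hβ)
          rcases le_or_gt (b β + ε) (b α) with h | h
          · exact (min_le_right _ _).trans (hv2 β hβ h)
          · exact (min_le_left _ _).trans h.le
        · intro α' hα'
          rcases Finset.mem_insert.mp hα' with rfl | hmem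
          · have hvα : b α' - ε ≤ (v : τ → ℝ) α' := by
              have : (ContinuousMap.const ↥A (b α') ⊓ MaxMinAux.proj A α') v =
                  min (b α') ((v : τ → ℝ) α') := by
                simp only [ContinuousMap.inf_apply, ContinuousMap.const_apply]
                rfl
              rw [this] at hv1
              exact le_trans hv1 (min_le_right _ _)
            exact le_trans (le_min (by linarith) hvα) (le_max_right _ _)
          · exact (haL α' hmem).trans (le_max_left _ _)
    obtain ⟨a, ha, h1, h2⟩ := main F
    exact ⟨a, ha, fun β hβ => abs_le.mpr ⟨by linarith [h2 β hβ], by linarith [h1 β hβ]⟩⟩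
  -- closure argument
  by_contra hb
  have hop : IsOpen Aᶜ := (hA.isClosed).isOpen_compl
  obtain ⟨I, u, hu, hpi⟩ := isOpen_pi_iff.mp hop b hb
  have hδ : ∀ i ∈ I, ∃ δ : ℝ, 0 < δ ∧ Metric.ball (b i) δ ⊆ u i := fun i hi =>
    Metric.isOpen_iff.mp (hu i hi).1 _ (hu i hi).2
  rcases I.eq_empty_or_nonempty with rfl | hI
  · exact (hpi (by simp)) hx₀
  · set δf : τ → ℝ := fun i => if h : i ∈ I then (hδ i h).choose else 1 with hδfdef
    have hδf : ∀ i ∈ I, 0 < δf i ∧ Metric.ball (b i) (δf i) ⊆ u i := by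
      intro i hi
      simp only [hδfdef, dif_pos hi]
      exact ⟨(hδ i hi).choose_spec.1, (hδ i hi).choose_spec.2⟩
    set ε := I.inf' hI δf with hεdef
    have hε : 0 < ε := (Finset.lt_inf'_iff hI).mpr fun i hi => (hδf i hi).1
    obtain ⟨a, ha, hab⟩ := key I (ε / 2) (by linarith)
    have hmem : a ∈ (I : Set τ).pi u := by
      intro i hi
      rw [Finset.mem_coe] at hi
      apply (hδf i hi).2
      rw [Metric.mem_ball, Real.dist_eq]
      have h1 := hab i hi
      have h2 : ε ≤ δf i := Finset.inf'_le _ hi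
      have := abs_le.mp h1
      rw [abs_lt]
      constructor <;> linarith [this.1, this.2]
    exact (hpi hmem) ha
end
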